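/- For every formula A of the language L of intuitionistic predicate logic, the formula A^t → □_F A^t is provable in Q∘S4.t. -/

import Mathlib

/-! ## Propositional intuitionistic formulas and IPC -/

inductive PropForm : Type
  | var : ℕ → PropForm
  | falsum : PropForm
  | and : PropForm → PropForm → PropForm
  | or : PropForm → PropForm → PropForm
  | impl : PropForm → PropForm → PropForm

/-- Hilbert-style intuitionistic propositional calculus. -/
inductive IPC : PropForm → Prop
  | ax1 (A B : PropForm) : IPC (A.impl (B.impl A))
  | ax2 (A B C : PropForm) : IPC ((A.impl (B.impl C)).impl ((A.impl B).impl (A.impl C)))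
  | andE1 (A B : PropForm) : IPC ((A.and B).impl A)
  | andE2 (A B : PropForm) : IPC ((A.and B).impl B)
  | andI (A B : PropForm) : IPC (A.impl (B.impl (A.and B)))
  | orI1 (A B : PropForm) : IPC (A.impl (A.or B))
  | orI2 (A B : PropForm) : IPC (B.impl (A.or B))
  | orE (A B C : PropForm) : IPC ((A.impl C).impl ((B.impl C).impl ((A.or B).impl C)))
  | exfalso (A : PropForm) : IPC (PropForm.falsum.impl A)
  | mp (A B : PropForm) : IPC (A.impl B) → IPC A → IPC B

/-! ## Bimodal propositional formulas and S4.t -/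

inductive BForm : Type
  | var : ℕ → BForm
  | falsum : BForm
  | impl : BForm → BForm → BForm
  | boxF : BForm → BForm
  | boxP : BForm → BForm

def BForm.neg (A : BForm) : BForm := A.impl .falsum
def BForm.diaF (A : BForm) : BForm := (A.neg.boxF).neg
def BForm.diaP (A : BForm) : BForm := (A.neg.boxP).neg

/-- The tense propositional logic S4.t: classical propositional logic, S4 axioms
for both `boxF` and `boxP`, the two tense axioms, MP and both necessitations. -/
inductive S4t : BForm → Prop
  | ax1 (A B : BForm) : S4t (A.impl (B.impl A))
  | ax2 (A B C : BForm) : S4t ((A.impl (B.impl C)).impl ((A.impl B).impl (A.impl C)))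
  | ax3 (A B : BForm) : S4t (((B.neg).impl (A.neg)).impl (A.impl B))
  | kF (A B : BForm) : S4t ((A.impl B).boxF.impl (A.boxF.impl B.boxF))
  | tF (A : BForm) : S4t (A.boxF.impl A)
  | fourF (A : BForm) : S4t (A.boxF.impl A.boxF.boxF)
  | kP (A B : BForm) : S4t ((A.impl B).boxP.impl (A.boxP.impl B.boxP))
  | tP (A : BForm) : S4t (A.boxP.impl A)
  | fourP (A : BForm) : S4t (A.boxP.impl A.boxP.boxP)
  | tense1 (A : BForm) : S4t (A.impl A.diaF.boxP)
  | tense2 (A : BForm) : S4t (A.impl A.diaP.boxF)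
  | mp (A B : BForm) : S4t (A.impl B) → S4t A → S4t B
  | necF (A : BForm) : S4t A → S4t A.boxF
  | necP (A : BForm) : S4t A → S4t A.boxP

/-! ## Predicate tense formulas (the language L_T) -/

/-- Formulas of the bimodal predicate language `L_T`.  The classical basis means
that `⊥, →, ∀, □F, □P` are primitive; the remaining connectives are the usual
classical abbreviations, defined below. -/
inductive TForm : Type
  | falsum : TForm
  | atom : ℕ → List ℕ → TForm
  | impl : TForm → TForm → TForm
  | all : ℕ → TForm → TForm
  | boxF : TForm → TForm
  | boxP : TForm → TForm

def TForm.neg (A : TForm) : TForm := A.impl .falsum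
def TForm.and (A B : TForm) : TForm := (A.impl B.neg).neg
def TForm.or (A B : TForm) : TForm := (A.neg).impl B
def TForm.iff (A B : TForm) : TForm := (A.impl B).and (B.impl A)
def TForm.ex (x : ℕ) (A : TForm) : TForm := (TForm.all x A.neg).neg
def TForm.diaF (A : TForm) : TForm := A.neg.boxF.neg
def TForm.diaP (A : TForm) : TForm := A.neg.boxP.neg

def TForm.freeVars : TForm → Finset ℕ
  | .falsum => ∅
  | .atom _ args => args.toFinset
  | .impl A B => A.freeVars ∪ B.freeVars
  | .all x A => A.freeVars.erase x
  | .boxF A => A.freeVars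
  | .boxP A => A.freeVars

/-- Replace every free occurrence of the variable `x` by `y`. -/
def TForm.subst (x y : ℕ) : TForm → TForm
  | .falsum => .falsum
  | .atom p args => .atom p (args.map fun v => if v = x then y else v)
  | .impl A B => .impl (A.subst x y) (B.subst x y)
  | .all z A => if z = x then .all z A else .all z (A.subst x y)
  | .boxF A => .boxF (A.subst x y)
  | .boxP A => .boxP (A.subst x y)

/-- `y` is substitutable for `x`: no free occurrence of `x` lies in the scope of
a quantifier binding `y`. -/
def TForm.substOK (x y : ℕ) : TForm → Prop
  | .falsum => True
  | .atom _ _ => True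
  | .impl A B => A.substOK x y ∧ B.substOK x y
  | .all z A => z = x ∨ ((z = y → x ∉ A.freeVars) ∧ A.substOK x y)
  | .boxF A => A.substOK x y
  | .boxP A => A.substOK x y

/-- Substitution of `L_T`-formulas for the propositional letters of a bimodal
propositional formula. -/
def BForm.tsubst (s : ℕ → TForm) : BForm → TForm
  | .var n => s n
  | .falsum => .falsum
  | .impl A B => .impl (A.tsubst s) (B.tsubst s)
  | .boxF A => .boxF (A.tsubst s)
  | .boxP A => .boxP (A.tsubst s)

/-! ## The predicate tense logic Q∘S4.t -/

inductive QoS4t : TForm → Prop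
  /-- all substitution instances of theorems of S4.t -/
  | s4t (φ : BForm) (s : ℕ → TForm) : S4t φ → QoS4t (φ.tsubst s)
  /-- (UI°)  ∀y(∀x A → A(y/x)) -/
  | ui (x y : ℕ) (A : TForm) (hok : A.substOK x y) :
      QoS4t (.all y ((TForm.all x A).impl (A.subst x y)))
  /-- ∀x(A → B) → (∀x A → ∀x B) -/
  | distrib (x : ℕ) (A B : TForm) :
      QoS4t ((TForm.all x (A.impl B)).impl ((TForm.all x A).impl (TForm.all x B)))
  /-- ∀x∀y A ↔ ∀y∀x A -/
  | comm (x y : ℕ) (A : TForm) :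
      QoS4t ((TForm.all x (TForm.all y A)).iff (TForm.all y (TForm.all x A)))
  /-- A → ∀x A, x not free in A -/
  | vac (x : ℕ) (A : TForm) (h : x ∉ A.freeVars) : QoS4t (A.impl (.all x A))
  /-- (NID)  ∀x A → A, x not free in A -/
  | nid (x : ℕ) (A : TForm) (h : x ∉ A.freeVars) : QoS4t ((TForm.all x A).impl A)
  /-- (CBF_F)  □F ∀x A → ∀x □F A -/
  | cbfF (x : ℕ) (A : TForm) : QoS4t ((TForm.all x A).boxF.impl (TForm.all x A.boxF))
  | mp (A B : TForm) : QoS4t (A.impl B) → QoS4t A → QoS4t B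
  | gen (x : ℕ) (A : TForm) : QoS4t A → QoS4t (.all x A)
  | necF (A : TForm) : QoS4t A → QoS4t A.boxF
  | necP (A : TForm) : QoS4t A → QoS4t A.boxP

/-! ## The language L of intuitionistic predicate logic and IQC -/

inductive IForm : Type
  | falsum : IForm
  | atom : ℕ → List ℕ → IForm
  | and : IForm → IForm → IForm
  | or : IForm → IForm → IForm
  | impl : IForm → IForm → IForm
  | all : ℕ → IForm → IForm
  | ex : ℕ → IForm → IForm

def IForm.freeVars : IForm → Finset ℕ
  | .falsum => ∅
  | .atom _ args => args.toFinset
  | .and A B => A.freeVars ∪ B.freeVars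
  | .or A B => A.freeVars ∪ B.freeVars
  | .impl A B => A.freeVars ∪ B.freeVars
  | .all x A => A.freeVars.erase x
  | .ex x A => A.freeVars.erase x

def IForm.subst (x y : ℕ) : IForm → IForm
  | .falsum => .falsum
  | .atom p args => .atom p (args.map fun v => if v = x then y else v)
  | .and A B => .and (A.subst x y) (B.subst x y)
  | .or A B => .or (A.subst x y) (B.subst x y)
  | .impl A B => .impl (A.subst x y) (B.subst x y)
  | .all z A => if z = x then .all z A else .all z (A.subst x y)
  | .ex z A => if z = x then .ex z A else .ex z (A.subst x y)

def IForm.substOK (x y : ℕ) : IForm → Prop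
  | .falsum => True
  | .atom _ _ => True
  | .and A B => A.substOK x y ∧ B.substOK x y
  | .or A B => A.substOK x y ∧ B.substOK x y
  | .impl A B => A.substOK x y ∧ B.substOK x y
  | .all z A => z = x ∨ ((z = y → x ∉ A.freeVars) ∧ A.substOK x y)
  | .ex z A => z = x ∨ ((z = y → x ∉ A.freeVars) ∧ A.substOK x y)

/-- Substitution of `L`-formulas for the propositional letters of an
intuitionistic propositional formula. -/
def PropForm.isubst (s : ℕ → IForm) : PropForm → IForm
  | .var n => s n
  | .falsum => .falsum
  | .and A B => .and (A.isubst s) (B.isubst s)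
  | .or A B => .or (A.isubst s) (B.isubst s)
  | .impl A B => .impl (A.isubst s) (B.isubst s)

/-- The intuitionistic predicate calculus IQC. -/
inductive IQC : IForm → Prop
  /-- all substitution instances of theorems of IPC -/
  | ipc (φ : PropForm) (s : ℕ → IForm) : IPC φ → IQC (φ.isubst s)
  /-- (UI)  ∀x A → A(y/x) -/
  | ui (x y : ℕ) (A : IForm) (hok : A.substOK x y) :
      IQC ((IForm.all x A).impl (A.subst x y))
  /-- A(y/x) → ∃x A -/
  | exI (x y : ℕ) (A : IForm) (hok : A.substOK x y) :
      IQC ((A.subst x y).impl (IForm.ex x A))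
  /-- ∀x(A → B) → (A → ∀x B), x not free in A -/
  | allImp (x : ℕ) (A B : IForm) (h : x ∉ A.freeVars) :
      IQC ((IForm.all x (A.impl B)).impl (A.impl (IForm.all x B)))
  /-- ∀x(A → B) → (∃x A → B), x not free in B -/
  | exImp (x : ℕ) (A B : IForm) (h : x ∉ B.freeVars) :
      IQC ((IForm.all x (A.impl B)).impl ((IForm.ex x A).impl B))
  | mp (A B : IForm) : IQC (A.impl B) → IQC A → IQC B
  | gen (x : ℕ) (A : IForm) : IQC A → IQC (.all x A)

/-! ## The temporal Gödel translation -/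

def IForm.t : IForm → TForm
  | .falsum => .falsum
  | .atom p args => .boxF (.atom p args)
  | .and A B => TForm.and A.t B.t
  | .or A B => TForm.or A.t B.t
  | .impl A B => .boxF (A.t.impl B.t)
  | .all x A => .boxF (.all x A.t)
  | .ex x A => TForm.diaP (TForm.ex x A.t)

/-- `closure [x₁,…,xₙ] A = ∀x₁ ⋯ ∀xₙ A`. -/
def TForm.closure (xs : List ℕ) (A : TForm) : TForm := xs.foldr TForm.all A

/-! ## Generalized Kripke semantics for Q∘S4.t -/

/-- A Q∘S4.t-frame: a reflexive transitive relation on a nonempty set of worlds,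
a nonempty constant outer domain `U`, and nonempty increasing inner domains. -/
structure TFrame where
  W : Type
  U : Type
  hW : Nonempty W
  hU : Nonempty U
  R : W → W → Prop
  refl : ∀ w, R w w
  trans : ∀ {u v w}, R u v → R v w → R u w
  D : W → Set U
  Dne : ∀ w, (D w).Nonempty
  Dmono : ∀ {w v}, R w v → D w ⊆ D v

/-- A model based on a Q∘S4.t-frame: interprets each predicate symbol at each
world as a relation on the outer domain. -/
structure TModel (F : TFrame) where
  I : F.W → ℕ → List F.U → Prop

/-- Truth of an `L_T`-formula at a world under an assignment. -/
def TModel.truth {F : TFrame} (M : TModel F) : F.W → (ℕ → F.U) → TForm → Prop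
  | _, _, .falsum => False
  | w, σ, .atom p args => M.I w p (args.map σ)
  | w, σ, .impl A B => M.truth w σ A → M.truth w σ B
  | w, σ, .all x A =>
      ∀ τ : ℕ → F.U, (∀ y, y ≠ x → τ y = σ y) → τ x ∈ F.D w → M.truth w τ A
  | w, σ, .boxF A => ∀ v, F.R w v → M.truth v σ A
  | w, σ, .boxP A => ∀ v, F.R v w → M.truth v σ A

/-- Validity of an `L_T`-formula in a Q∘S4.t-frame. -/
def TFrame.valid (F : TFrame) (A : TForm) : Prop :=
  ∀ M : TModel F, ∀ w : F.W, ∀ σ : ℕ → F.U, M.truth w σ A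

/-! ## Kripke semantics for IQC -/

/-- An IQC-frame: a partial order on a nonempty set of worlds with nonempty
increasing domains. -/
structure IFrame where
  W : Type
  α : Type
  hW : Nonempty W
  R : W → W → Prop
  refl : ∀ w, R w w
  trans : ∀ {u v w}, R u v → R v w → R u w
  antisymm : ∀ {u v}, R u v → R v u → u = v
  D : W → Set α
  Dne : ∀ w, (D w).Nonempty
  Dmono : ∀ {w v}, R w v → D w ⊆ D v

/-- An IQC-model: `I w P ⊆ (D w)ⁿ`, increasing along `R`. -/
structure IModel (F : IFrame) where
  I : F.W → ℕ → List F.α → Prop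
  Isub : ∀ w p as, I w p as → ∀ a ∈ as, a ∈ F.D w
  Imono : ∀ {w v} (p : ℕ) (as : List F.α), F.R w v → I w p as → I v p as

/-- Intuitionistic truth of an `L`-formula at a world under an assignment. -/
def IModel.truth {F : IFrame} (M : IModel F) : F.W → (ℕ → F.α) → IForm → Prop
  | _, _, .falsum => False
  | w, σ, .atom p args => M.I w p (args.map σ)
  | w, σ, .and A B => M.truth w σ A ∧ M.truth w σ B
  | w, σ, .or A B => M.truth w σ A ∨ M.truth w σ B
  | w, σ, .impl A B => ∀ v, F.R w v → M.truth v σ A → M.truth v σ B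
  | w, σ, .all x A =>
      ∀ v, F.R w v → ∀ τ : ℕ → F.α, (∀ y, y ≠ x → τ y = σ y) → τ x ∈ F.D v →
        M.truth v τ A
  | w, σ, .ex x A =>
      ∃ τ : ℕ → F.α, (∀ y, y ≠ x → τ y = σ y) ∧ τ x ∈ F.D w ∧ M.truth w τ A

/-! ## The associated Q∘S4.t-model M̄ -/

/-- The Q∘S4.t-frame associated to an IQC-frame: same worlds and relation,
outer domain `U = ⋃ { D_w ∣ w ∈ W }`, same inner domains. -/
def IFrame.bar (F : IFrame) : TFrame where
  W := F.W
  U := {a : F.α // ∃ w, a ∈ F.D w}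
  hW := F.hW
  hU := by
    obtain ⟨w⟩ := F.hW
    obtain ⟨a, ha⟩ := F.Dne w
    exact ⟨⟨a, w, ha⟩⟩
  R := F.R
  refl := F.refl
  trans := F.trans
  D := fun w => {a | a.1 ∈ F.D w}
  Dne := fun w => by
    obtain ⟨a, ha⟩ := F.Dne w
    exact ⟨⟨a, w, ha⟩, ha⟩
  Dmono := fun h _ ha => F.Dmono h ha

/-- The Q∘S4.t-model `M̄` associated to an IQC-model `M`. -/
def IModel.bar {F : IFrame} (M : IModel F) : TModel F.bar where
  I := fun w p as => M.I w p (as.map Subtype.val)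

/-!
Every clause of the translation other than those for `∧` and `∨` is `⊥` or starts with `□F`
or `◇P`. A formula `□F B` implies `□F □F B` by axiom 4, and `◇P B` implies `□F ◇P B` by the tense
axiom `◇P B → □F ◇P ◇P B` together with `◇P ◇P B → ◇P B`. Formulas implying their own
`□F`-necessitation are closed under `∧` and `∨`, so induction on `A` concludes.
-/

-- Chosen so that `tsubst` sends them to `TForm.and` and `TForm.or` definitionally.
def BForm.band (A B : BForm) : BForm := (A.impl B.neg).neg
def BForm.bor (A B : BForm) : BForm := A.neg.impl B

-- Necessitation is confined to theorems (`thm`), which is what makes `imp_intro` hold.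
inductive S4t.Derives : List BForm → BForm → Prop
  | hyp {Γ A} : A ∈ Γ → S4t.Derives Γ A
  | thm {Γ A} : S4t A → S4t.Derives Γ A
  | mp {Γ A B} : S4t.Derives Γ (A.impl B) → S4t.Derives Γ A → S4t.Derives Γ B

namespace S4t

variable {Γ : List BForm} {A B C : BForm}

theorem imp_self (A : BForm) : S4t (A.impl A) :=
  mp _ _ (mp _ _ (ax2 A (A.impl A) A) (ax1 A (A.impl A))) (ax1 A A)

theorem falsum_imp (A : BForm) : S4t (BForm.falsum.impl A) :=
  mp _ _ (ax3 .falsum A) (mp _ _ (ax1 _ _) (imp_self .falsum))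

theorem boxF_mono (h : S4t (A.impl B)) : S4t (A.boxF.impl B.boxF) :=
  mp _ _ (kF A B) (necF _ h)

theorem boxP_mono (h : S4t (A.impl B)) : S4t (A.boxP.impl B.boxP) :=
  mp _ _ (kP A B) (necP _ h)

namespace Derives

theorem head : Derives (A :: Γ) A := hyp List.mem_cons_self

theorem cons (h : Derives Γ B) : Derives (A :: Γ) B := by
  induction h with
  | hyp hB => exact hyp (List.mem_cons_of_mem _ hB)
  | thm hB => exact thm hB
  | mp _ _ ihAB ihA => exact mp ihAB ihA

theorem imp_intro (h : Derives (A :: Γ) B) : Derives Γ (A.impl B) := by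
  generalize hΔ : A :: Γ = Δ at h
  induction h with
  | hyp hB =>
    subst hΔ
    rcases List.mem_cons.mp hB with rfl | hB
    · exact thm (imp_self _)
    · exact mp (thm (ax1 _ _)) (hyp hB)
  | thm hB => exact mp (thm (ax1 _ _)) (thm hB)
  | mp _ _ ihBC ihB => exact mp (mp (thm (ax2 _ _ _)) ihBC) ihB

end Derives

theorem of_derives_nil (h : Derives [] A) : S4t A := by
  generalize hΔ : [] = Δ at h
  induction h with
  | hyp hA => subst hΔ; simp at hA
  | thm hA => exact hA
  | mp _ _ ihAB ihA => exact mp _ _ ihAB ihA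

theorem imp_trans (hAB : S4t (A.impl B)) (hBC : S4t (B.impl C)) : S4t (A.impl C) :=
  of_derives_nil (.imp_intro (.mp (.thm hBC) (.mp (.thm hAB) .head)))

theorem not_imp_not (h : S4t (A.impl B)) : S4t (B.neg.impl A.neg) :=
  of_derives_nil (.imp_intro (.imp_intro (.mp Derives.head.cons (.mp (.thm h) .head))))

theorem imp_not_not (A : BForm) : S4t (A.impl A.neg.neg) :=
  of_derives_nil (.imp_intro (.imp_intro (.mp .head Derives.head.cons)))

theorem not_not_imp (A : BForm) : S4t (A.neg.neg.impl A) :=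
  mp _ _ (ax3 A.neg.neg A) (imp_not_not A.neg)

theorem band_intro (A B : BForm) : S4t (A.impl (B.impl (A.band B))) :=
  of_derives_nil <| .imp_intro <| .imp_intro <| .imp_intro <|
    .mp (.mp .head Derives.head.cons.cons) Derives.head.cons

theorem bor_inl (A B : BForm) : S4t (A.impl (A.bor B)) :=
  of_derives_nil <| .imp_intro <| .imp_intro <|
    .mp (.thm (falsum_imp B)) (.mp .head Derives.head.cons)

namespace Derives

theorem by_contra (h : Derives (A.neg :: Γ) .falsum) : Derives Γ A :=
  mp (thm (not_not_imp A)) (imp_intro h)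

theorem by_cases (hpos : Derives (A :: Γ) C) (hneg : Derives (A.neg :: Γ) C) : Derives Γ C :=
  by_contra <| mp head <| mp (imp_intro hneg).cons <| imp_intro <|
    mp head.cons (mp (imp_intro hpos).cons.cons head)

theorem band_left (h : Derives Γ (A.band B)) : Derives Γ A :=
  by_contra <| mp h.cons <| imp_intro <|
    mp (thm (falsum_imp _)) (mp head.cons head)

theorem band_right (h : Derives Γ (A.band B)) : Derives Γ B :=
  by_contra <| mp h.cons <| mp (thm (ax1 _ _)) head

theorem boxF_mono (h : S4t (A.impl B)) (hA : Derives Γ A.boxF) : Derives Γ B.boxF :=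
  mp (thm h.boxF_mono) hA

theorem band_boxF (hA : Derives Γ (A.impl A.boxF)) (hB : Derives Γ (B.impl B.boxF))
    (h : Derives Γ (A.band B)) : Derives Γ (A.band B).boxF :=
  mp (mp (thm (kF _ _)) (boxF_mono (band_intro A B) (mp hA h.band_left))) (mp hB h.band_right)

theorem bor_boxF (hA : Derives Γ (A.impl A.boxF)) (hB : Derives Γ (B.impl B.boxF))
    (h : Derives Γ (A.bor B)) : Derives Γ (A.bor B).boxF :=
  by_cases (boxF_mono (bor_inl A B) (mp hA.cons head))
    (boxF_mono (ax1 B A.neg) (mp hB.cons (mp h.cons head)))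

end Derives

theorem band_imp_boxF_band (A B : BForm) :
    S4t ((A.impl A.boxF).impl ((B.impl B.boxF).impl ((A.band B).impl (A.band B).boxF))) :=
  of_derives_nil <| .imp_intro <| .imp_intro <| .imp_intro <|
    .band_boxF Derives.head.cons.cons Derives.head.cons .head

theorem bor_imp_boxF_bor (A B : BForm) :
    S4t ((A.impl A.boxF).impl ((B.impl B.boxF).impl ((A.bor B).impl (A.bor B).boxF))) :=
  of_derives_nil <| .imp_intro <| .imp_intro <| .imp_intro <|
    .bor_boxF Derives.head.cons.cons Derives.head.cons .head

theorem diaP_diaP_imp_diaP (A : BForm) : S4t (A.diaP.diaP.impl A.diaP) :=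
  not_imp_not <| imp_trans (fourP A.neg) (boxP_mono (imp_not_not A.neg.boxP))

theorem diaP_imp_boxF_diaP (A : BForm) : S4t (A.diaP.impl A.diaP.boxF) :=
  imp_trans (tense2 A.diaP) (boxF_mono (diaP_diaP_imp_diaP A))

end S4t

namespace QoS4t

theorem falsum_imp (A : TForm) : QoS4t (TForm.falsum.impl A) :=
  s4t _ (fun _ => A) (S4t.falsum_imp (.var 0))

theorem boxF_imp_boxF_boxF (A : TForm) : QoS4t (A.boxF.impl A.boxF.boxF) :=
  s4t _ (fun _ => A) (S4t.fourF (.var 0))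

theorem diaP_imp_boxF_diaP (A : TForm) : QoS4t (A.diaP.impl A.diaP.boxF) :=
  s4t _ (fun _ => A) (S4t.diaP_imp_boxF_diaP (.var 0))

theorem and_imp_boxF_and {A B : TForm} (hA : QoS4t (A.impl A.boxF))
    (hB : QoS4t (B.impl B.boxF)) : QoS4t ((A.and B).impl (A.and B).boxF) :=
  mp _ _ (mp _ _ (s4t _ (fun n => if n = 0 then A else B)
    (S4t.band_imp_boxF_band (.var 0) (.var 1))) hA) hB

theorem or_imp_boxF_or {A B : TForm} (hA : QoS4t (A.impl A.boxF))
    (hB : QoS4t (B.impl B.boxF)) : QoS4t ((A.or B).impl (A.or B).boxF) :=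
  mp _ _ (mp _ _ (s4t _ (fun n => if n = 0 then A else B)
    (S4t.bor_imp_boxF_bor (.var 0) (.var 1))) hA) hB

end QoS4t

/-- For every formula `A` of `L`, the formula `A^t → □F A^t` is provable in
Q∘S4.t. -/
theorem translation_implies_boxF_translation (A : IForm) :
    QoS4t (A.t.impl (TForm.boxF A.t)) := by
  induction A with
  | falsum => exact QoS4t.falsum_imp _
  | atom => exact QoS4t.boxF_imp_boxF_boxF _
  | and A B ihA ihB => exact QoS4t.and_imp_boxF_and ihA ihB
  | or A B ihA ihB => exact QoS4t.or_imp_boxF_or ihA ihB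
  | impl => exact QoS4t.boxF_imp_boxF_boxF _
  | all => exact QoS4t.boxF_imp_boxF_boxF _
  | ex => exact QoS4t.diaP_imp_boxF_diaP _
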